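/- (Binet's formula for bicomplex Pell numbers) For every natural number n, (α − β)·BP(n) = α̂·αⁿ − β̂·βⁿ, i.e. BP(n) = (α̂·αⁿ − β̂·βⁿ)/(2√2), where the real scalars αⁿ and βⁿ act on ℂ ⊗[ℝ] ℂ by scalar multiplication. -/
import Mathlib


open scoped TensorProduct

noncomputable def bi : ℂ ⊗[ℝ] ℂ := Complex.I ⊗ₜ[ℝ] 1
noncomputable def bj : ℂ ⊗[ℝ] ℂ := (1 : ℂ) ⊗ₜ[ℝ] Complex.I
noncomputable def bij : ℂ ⊗[ℝ] ℂ := Complex.I ⊗ₜ[ℝ] Complex.I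

/-- The bicomplex Pell number `BP n = P n + P (n+1) i + P (n+2) j + P (n+3) ij`. -/
noncomputable def BP (P : ℤ → ℤ) (n : ℤ) : ℂ ⊗[ℝ] ℂ :=
  (P n : ℝ) • (1 : ℂ ⊗[ℝ] ℂ) + (P (n + 1) : ℝ) • bi + (P (n + 2) : ℝ) • bj +
    (P (n + 3) : ℝ) • bij

noncomputable def pellAlpha : ℝ := 1 + Real.sqrt 2
noncomputable def pellBeta : ℝ := 1 - Real.sqrt 2

noncomputable def alphaHat : ℂ ⊗[ℝ] ℂ :=
  1 + pellAlpha • bi + (pellAlpha ^ 2) • bj + (pellAlpha ^ 3) • bij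

noncomputable def betaHat : ℂ ⊗[ℝ] ℂ :=
  1 + pellBeta • bi + (pellBeta ^ 2) • bj + (pellBeta ^ 3) • bij

theorem bicomplexPell_binet (P : ℤ → ℤ)
    (hP : ∀ n : ℤ, P (n + 2) = 2 * P (n + 1) + P n) (hP0 : P 0 = 0) (hP1 : P 1 = 1)
    (n : ℕ) :
    (pellAlpha - pellBeta) • BP P (n : ℤ) =
      (pellAlpha ^ n) • alphaHat - (pellBeta ^ n) • betaHat := by

  have ha2 : pellAlpha ^ 2 = 2 * pellAlpha + 1 := by
    unfold pellAlpha
    nlinarith [Real.sq_sqrt (by norm_num : (0:ℝ) ≤ 2)]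
  have hb2 : pellBeta ^ 2 = 2 * pellBeta + 1 := by
    unfold pellBeta
    nlinarith [Real.sq_sqrt (by norm_num : (0:ℝ) ≤ 2)]
  have key : ∀ m : ℕ, (pellAlpha - pellBeta) * ((P (m : ℤ)) : ℝ)
      = pellAlpha ^ m - pellBeta ^ m := by
    intro m
    induction m using Nat.twoStepInduction with
    | zero => simp [hP0]
    | one => simp [hP1]
    | more k ih1 ih2 =>
      have hrec : ((P ((k : ℤ) + 2) : ℤ) : ℝ)
          = 2 * ((P ((k : ℤ) + 1) : ℤ) : ℝ) + ((P (k : ℤ)) : ℝ) := by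
        exact_mod_cast congrArg (fun x => ((x : ℤ) : ℝ)) (hP k)
      have hc2 : ((k + 2 : ℕ) : ℤ) = (k : ℤ) + 2 := by push_cast; ring
      have hc1 : ((k + 1 : ℕ) : ℤ) = (k : ℤ) + 1 := by push_cast; ring
      rw [hc2, hrec]
      rw [hc1] at ih2
      have : pellAlpha ^ (k + 2) = (2 * pellAlpha + 1) * pellAlpha ^ k := by
        rw [← ha2]; ring
      rw [this]
      have : pellBeta ^ (k + 2) = (2 * pellBeta + 1) * pellBeta ^ k := by
        rw [← hb2]; ring
      rw [this]
      have : pellAlpha ^ (k + 1) = pellAlpha * pellAlpha ^ k := by ring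
      rw [this] at ih2
      have : pellBeta ^ (k + 1) = pellBeta * pellBeta ^ k := by ring
      rw [this] at ih2
      nlinarith [ih1, ih2]
  have e0 := key n
  have e1 := key (n + 1)
  have e2 := key (n + 2)
  have e3 := key (n + 3)
  have hc1 : ((n + 1 : ℕ) : ℤ) = (n : ℤ) + 1 := by push_cast; ring
  have hc2 : ((n + 2 : ℕ) : ℤ) = (n : ℤ) + 2 := by push_cast; ring
  have hc3 : ((n + 3 : ℕ) : ℤ) = (n : ℤ) + 3 := by push_cast; ring
  rw [hc1] at e1; rw [hc2] at e2; rw [hc3] at e3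
  unfold BP alphaHat betaHat
  match_scalars
  · linear_combination e0
  · linear_combination e1
  · linear_combination e2
  · linear_combination e3
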